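/- Let p, q ∈ Δ^m with q = Bp for a doubly-stochastic matrix B. If there exists a row i* and indices j₁ ≠ j₂ with B_{i*j₁} > 0, B_{i*j₂} > 0, and p_{j₁} ≠ p_{j₂}, then H(q) > H(p) strictly. -/

import Mathlib

/-!
Each coordinate of `q = B p` is a convex combination of the `p j`, so Jensen's inequality for the
strictly convex `f x = x log x` gives `f (q i) ≤ ∑ j, B i j * f (p j)`, strictly in row `i*`, which
mixes two different values of `p` with positive weights. Summing over `i` and using that the
columns of `B` sum to one yields `∑ i, f (q i) < ∑ j, f (p j)`.
-/

noncomputable def entropy {m : ℕ} (u : Fin m → ℝ) : ℝ :=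
  -∑ i, u i * Real.log (u i)

open Finset Matrix

section StochasticJensen

variable {𝕜 n : Type*} [Field 𝕜] [LinearOrder 𝕜] [IsStrictOrderedRing 𝕜]
  [Fintype n] [DecidableEq n] {M : Matrix n n 𝕜} {s : Set 𝕜} {f : 𝕜 → 𝕜} {x : n → 𝕜}

theorem ConvexOn.map_mulVec_le (hf : ConvexOn 𝕜 s f) (hM : M ∈ rowStochastic 𝕜 n)
    (hx : ∀ j, x j ∈ s) (i : n) : f ((M *ᵥ x) i) ≤ (M *ᵥ (f ∘ x)) i := by
  simpa [mulVec, dotProduct] using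
    hf.map_sum_le (t := univ) (w := M i) (fun j _ => nonneg_of_mem_rowStochastic hM)
      (sum_row_of_mem_rowStochastic hM i) (fun j _ => hx j)

theorem StrictConvexOn.map_mulVec_lt (hf : StrictConvexOn 𝕜 s f) (hM : M ∈ rowStochastic 𝕜 n)
    (hx : ∀ j, x j ∈ s) {i j k : n} (hj : M i j ≠ 0) (hk : M i k ≠ 0) (hjk : x j ≠ x k) :
    f ((M *ᵥ x) i) < (M *ᵥ (f ∘ x)) i := by
  have := (hf.map_sum_lt_iff_of_nonneg (t := univ) (w := M i)
    (fun j _ => nonneg_of_mem_rowStochastic hM) (sum_row_of_mem_rowStochastic hM i)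
    (fun j _ => hx j)).mpr ⟨j, mem_univ j, k, mem_univ k, hj, hk, hjk⟩
  simpa [mulVec, dotProduct] using this

theorem StrictConvexOn.sum_map_mulVec_lt (hf : StrictConvexOn 𝕜 s f)
    (hM : M ∈ doublyStochastic 𝕜 n) (hx : ∀ j, x j ∈ s) {i j k : n} (hj : M i j ≠ 0)
    (hk : M i k ≠ 0) (hjk : x j ≠ x k) :
    ∑ i, f ((M *ᵥ x) i) < ∑ j, f (x j) := by
  have hMrow : M ∈ rowStochastic 𝕜 n :=
    (mem_doublyStochastic_iff_mem_rowStochastic_and_mem_colStochastic.mp hM).1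
  calc ∑ i, f ((M *ᵥ x) i) < ∑ i, (M *ᵥ (f ∘ x)) i :=
        sum_lt_sum (fun i _ => hf.convexOn.map_mulVec_le hMrow hx i)
          ⟨i, mem_univ i, hf.map_mulVec_lt hMrow hx hj hk hjk⟩
    _ = ∑ j, f (x j) := sum_mulVec_of_mem_doublyStochastic hM

end StochasticJensen

theorem entropy_doublyStochastic_lt_general {m : ℕ} (p q : Fin m → ℝ)
    (B : Matrix (Fin m) (Fin m) ℝ)
    (hp0 : ∀ i, 0 ≤ p i)
    (hB0 : ∀ i j, 0 ≤ B i j)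
    (hBrow : ∀ i, ∑ j, B i j = 1)
    (hBcol : ∀ j, ∑ i, B i j = 1)
    (hq : ∀ i, q i = ∑ j, B i j * p j)
    (istar : Fin m) (j₁ j₂ : Fin m)
    (h1 : 0 < B istar j₁) (h2 : 0 < B istar j₂)
    (hpj : p j₁ ≠ p j₂) :
    entropy p < entropy q := by
  have hB : B ∈ doublyStochastic ℝ (Fin m) :=
    mem_doublyStochastic_iff_sum.mpr ⟨hB0, hBrow, hBcol⟩
  have hqB : q = B *ᵥ p := funext hq
  have key := Real.strictConvexOn_mul_log.sum_map_mulVec_lt hB hp0 h1.ne' h2.ne' hpj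
  rw [← hqB] at key
  exact neg_lt_neg key

theorem entropy_doublyStochastic_lt {m : ℕ} (p q : Fin m → ℝ)
    (B : Matrix (Fin m) (Fin m) ℝ)
    (hp0 : ∀ i, 0 ≤ p i) (hp1 : ∑ i, p i = 1)
    (hq0 : ∀ i, 0 ≤ q i) (hq1 : ∑ i, q i = 1)
    (hB0 : ∀ i j, 0 ≤ B i j)
    (hBrow : ∀ i, ∑ j, B i j = 1)
    (hBcol : ∀ j, ∑ i, B i j = 1)
    (hq : ∀ i, q i = ∑ j, B i j * p j)
    (istar : Fin m) (j₁ j₂ : Fin m) (hj : j₁ ≠ j₂)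
    (h1 : 0 < B istar j₁) (h2 : 0 < B istar j₂)
    (hpj : p j₁ ≠ p j₂) :
    entropy p < entropy q :=
  entropy_doublyStochastic_lt_general p q B hp0 hB0 hBrow hBcol hq istar j₁ j₂ h1 h2 hpj
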